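/- arXiv:2312.11706 — 2 statements merged into one kernel-verified Lean document; each statement's English description precedes it below -/
import Mathlib

section
/- For all integers k ≥ 2, a(F_k + 1) = F_{k+1} − 1. -/
/-- The sequence A105774: `a n = n` for `n ≤ 1`, and
`a n = fib (j+1) - a (n - fib j)` where `j ≥ 2` is the unique index
with `fib j < n ≤ fib (j+1)` (realized as the greatest `j ≤ n` with `fib j < n`). -/
def a (n : ℕ) : ℕ :=
  if _h : n ≤ 1 then n
  else
    Nat.fib (Nat.findGreatest (fun j => Nat.fib j < n) n + 1) -
      a (n - Nat.fib (Nat.findGreatest (fun j => Nat.fib j < n) n))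
decreasing_by
  have h2 : 2 ≤ n := by omega
  have hj : 2 ≤ Nat.findGreatest (fun j => Nat.fib j < n) n :=
    Nat.le_findGreatest h2 (by show Nat.fib 2 < n; simp [Nat.fib_two]; omega)
  have hpos : 0 < Nat.fib (Nat.findGreatest (fun j => Nat.fib j < n) n) :=
    Nat.fib_pos.mpr (by omega)
  omega

lemma findGreatest_fib_lt_eq {n k : ℕ} (hlo : Nat.fib k < n) (hhi : n ≤ Nat.fib (k + 1)) :
    Nat.findGreatest (fun j => Nat.fib j < n) n = k := by
  refine Nat.findGreatest_eq_iff.mpr ⟨?_, fun _ => hlo, fun m hkm _ hm => ?_⟩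
  · have := Nat.le_fib_add_one k
    omega
  · have := Nat.fib_mono (show k + 1 ≤ m from hkm)
    omega

lemma a_of_fib_lt_of_le {n k : ℕ} (hk : 2 ≤ k) (hlo : Nat.fib k < n)
    (hhi : n ≤ Nat.fib (k + 1)) : a n = Nat.fib (k + 1) - a (n - Nat.fib k) := by
  have hfib : 0 < Nat.fib k := Nat.fib_pos.mpr (by omega)
  rw [a, dif_neg (by omega), findGreatest_fib_lt_eq hlo hhi]

lemma a_one : a 1 = 1 := by
  rw [a, dif_pos le_rfl]

/-- For all `k ≥ 2`, `a (F_k + 1) = F_{k+1} - 1`. -/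
theorem a105774_at_fib_succ (k : ℕ) (hk : 2 ≤ k) :
    a (Nat.fib k + 1) = Nat.fib (k + 1) - 1 := by
  rw [a_of_fib_lt_of_le hk (Nat.lt_add_one _) (Nat.fib_lt_fib_succ hk), Nat.add_sub_cancel_left,
    a_one]
end

section
/- With β(n) = ⌊φ·n⌋: (a) for all n ≥ 0, a(β(n)) ≥ β(a(n)); (b) for all n ≥ 0, β(a(β(n))) ≥ a(β(a(n))). -/
noncomputable def beta (n : ℕ) : ℕ := ⌊Real.goldenRatio * (n : ℝ)⌋₊

open Real Set
open Nat (fib)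
open scoped goldenRatio

namespace Int

variable {R : Type*} [CommRing R] [LinearOrder R] [IsStrictOrderedRing R] [FloorRing R] {y e δ : R}

theorem floor_sub_eq_of_abs_lt (hy : fract y ∈ Icc δ (1 - δ)) (he : |e| < δ) :
    ⌊y - e⌋ = ⌊y⌋ := by
  have hfract := self_sub_floor y
  have he' := abs_lt.mp he
  rw [floor_eq_iff]
  constructor <;> linarith [hy.1, hy.2]

theorem fract_sub_eq_of_abs_lt (hy : fract y ∈ Icc δ (1 - δ)) (he : |e| < δ) :
    fract (y - e) = fract y - e := by
  rw [← self_sub_floor, ← self_sub_floor y, floor_sub_eq_of_abs_lt hy he]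
  ring

theorem fract_mem_Icc_abs (hy : y ≠ 0) (hy' : 2 * |y| ≤ 1) : fract y ∈ Icc |y| (1 - |y|) := by
  rcases hy.lt_or_gt with hneg | hpos
  · rw [abs_of_neg hneg] at hy' ⊢
    rw [(fract_eq_iff (b := y + 1)).mpr ⟨by linarith, by linarith, -1, by push_cast; ring⟩]
    constructor <;> linarith
  · rw [abs_of_pos hpos] at hy' ⊢
    rw [fract_eq_self.mpr ⟨hpos.le, by linarith⟩]
    constructor <;> linarith

end Int

theorem abs_goldenConj_pow (k : ℕ) : |ψ ^ k| = φ⁻¹ ^ k := by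
  rw [abs_pow, inv_goldenRatio, abs_of_neg goldenConj_neg]

theorem goldenRatio_mul_fib (k : ℕ) : φ * fib k = fib (k + 1) - ψ ^ k := by
  linarith [fib_succ_sub_goldenRatio_mul_fib k]

theorem inv_goldenRatio_pow_lt {i j : ℕ} (h : i < j) : φ⁻¹ ^ j < φ⁻¹ ^ i :=
  pow_lt_pow_right_of_lt_one₀ (inv_pos.mpr goldenRatio_pos)
    (inv_lt_one_of_one_lt₀ one_lt_goldenRatio) h

theorem abs_goldenConj_pow_succ_lt_one (k : ℕ) : |ψ ^ (k + 1)| < 1 := by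
  simpa using (abs_goldenConj_pow (k + 1)).trans_lt (inv_goldenRatio_pow_lt k.succ_pos)

theorem inv_goldenRatio_pow_add_two (k : ℕ) : φ⁻¹ ^ (k + 2) + φ⁻¹ ^ (k + 1) = φ⁻¹ ^ k := by
  have hq : φ⁻¹ = φ - 1 := by rw [inv_goldenRatio]; linarith [goldenRatio_add_goldenConj]
  have : φ⁻¹ ^ 2 + φ⁻¹ = 1 := by rw [hq]; nlinarith [goldenRatio_sq]
  linear_combination φ⁻¹ ^ k * this

theorem two_mul_inv_goldenRatio_pow_le_one (k : ℕ) : 2 * φ⁻¹ ^ (k + 2) ≤ 1 := by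
  have h2 : φ⁻¹ ^ 2 + φ⁻¹ = 1 := by simpa using inv_goldenRatio_pow_add_two 0
  have hhalf : 1 / 2 < φ⁻¹ := by
    rw [one_div]; exact inv_strictAnti₀ goldenRatio_pos goldenRatio_lt_two
  have hk : φ⁻¹ ^ (k + 2) ≤ φ⁻¹ ^ 2 :=
    pow_le_pow_of_le_one (inv_pos.mpr goldenRatio_pos).le
      (inv_lt_one_of_one_lt₀ one_lt_goldenRatio).le (by omega)
  linarith

/-- The Fibonacci numbers are the best approximation denominators of `φ`. -/
theorem fract_goldenRatio_mul_mem_Icc (k : ℕ) :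
    ∀ {r : ℕ}, 0 < r → r < fib (k + 1) → Int.fract (φ * r) ∈ Icc (φ⁻¹ ^ k) (1 - φ⁻¹ ^ k) := by
  induction k using Nat.twoStepInduction with
  | zero => intro r hr hr1; rw [zero_add, Nat.fib_one] at hr1; omega
  | one => intro r hr hr1; rw [Nat.fib_two] at hr1; omega
  | more k ih₀ ih₁ =>
    intro r hr hrk
    have hlt := inv_goldenRatio_pow_lt (show k + 1 < k + 2 by omega)
    by_cases hr' : r < fib (k + 2)
    · exact Icc_subset_Icc hlt.le (by linarith) (ih₁ hr hr')
    obtain ⟨s, rfl⟩ := Nat.exists_eq_add_of_le (not_lt.mp hr')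
    have hs : s < fib (k + 1) := by
      have : fib (k + 2 + 1) = fib (k + 1) + fib (k + 2) := Nat.fib_add_two
      omega
    have hφ : φ * ((fib (k + 2) + s : ℕ) : ℝ) = fib (k + 3) + (φ * s - ψ ^ (k + 2)) := by
      push_cast; rw [mul_add, goldenRatio_mul_fib]; ring
    rw [hφ, Int.fract_natCast_add]
    rcases Nat.eq_zero_or_pos s with rfl | hs0
    · rw [Nat.cast_zero, mul_zero, zero_sub]
      have := Int.fract_mem_Icc_abs (neg_ne_zero.mpr (pow_ne_zero (k + 2) goldenConj_ne_zero))
        (by rw [abs_neg, abs_goldenConj_pow]; exact two_mul_inv_goldenRatio_pow_le_one k)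
      rwa [abs_neg, abs_goldenConj_pow] at this
    · have hfract := ih₀ hs0 hs
      have he : |ψ ^ (k + 2)| < φ⁻¹ ^ k := by
        rw [abs_goldenConj_pow]; exact inv_goldenRatio_pow_lt (by omega)
      rw [Int.fract_sub_eq_of_abs_lt hfract he]
      have hψ := abs_le.mp (abs_goldenConj_pow (k + 2)).le
      have hq := inv_goldenRatio_pow_add_two k
      constructor <;> linarith [hfract.1, hfract.2]

theorem natCast_beta_eq_floor (n : ℕ) : (beta n : ℤ) = ⌊φ * n⌋ :=
  Int.natCast_floor_eq_floor (by positivity)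

theorem beta_mono : Monotone beta := fun _ _ h =>
  Nat.floor_le_floor (mul_le_mul_of_nonneg_left (by exact_mod_cast h) goldenRatio_pos.le)

theorem le_beta (n : ℕ) : n ≤ beta n :=
  Nat.le_floor (le_mul_of_one_le_left n.cast_nonneg one_lt_goldenRatio.le)

theorem beta_one : beta 1 = 1 :=
  (Nat.floor_eq_iff (by positivity)).mpr
    ⟨by simpa using one_lt_goldenRatio.le, by push_cast; linarith [goldenRatio_lt_two]⟩

theorem beta_two : beta 2 = 3 := by
  have h5 := Real.sq_sqrt (show (0 : ℝ) ≤ 5 by norm_num)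
  have : 2 ≤ √5 := by nlinarith [Real.sqrt_nonneg 5]
  have : √5 < 3 := by nlinarith [Real.sqrt_nonneg 5]
  refine (Nat.floor_eq_iff (by positivity)).mpr ⟨?_, ?_⟩ <;> norm_num [goldenRatio] <;> linarith

theorem beta_fib_le (k : ℕ) : beta (fib (k + 1)) ≤ fib (k + 2) := by
  have hψ := abs_lt.mp (abs_goldenConj_pow_succ_lt_one k)
  rw [← Nat.lt_succ_iff, beta, Nat.floor_lt (by positivity), goldenRatio_mul_fib]
  push_cast
  linarith

theorem fib_succ_le_beta {k n : ℕ} (h : fib (k + 1) < n) : fib (k + 2) ≤ beta n := by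
  have hψ := abs_lt.mp (abs_goldenConj_pow_succ_lt_one k)
  have hkn : (fib (k + 1) : ℝ) + 1 ≤ n := by exact_mod_cast h
  apply Nat.le_floor
  nlinarith [goldenRatio_mul_fib (k + 1), one_lt_goldenRatio]

theorem beta_fib_add {k m : ℕ} (hm : 0 < m) (hmk : m < fib (k + 2)) :
    beta (fib (k + 2) + m) = fib (k + 3) + beta m := by
  have hfract := fract_goldenRatio_mul_mem_Icc (k + 1) hm hmk
  have he : |ψ ^ (k + 2)| < φ⁻¹ ^ (k + 1) := by
    rw [abs_goldenConj_pow]; exact inv_goldenRatio_pow_lt (by omega)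
  have hφ : φ * ((fib (k + 2) + m : ℕ) : ℝ) = fib (k + 3) + (φ * m - ψ ^ (k + 2)) := by
    push_cast; rw [mul_add, goldenRatio_mul_fib]; ring
  zify
  rw [natCast_beta_eq_floor, natCast_beta_eq_floor, hφ, Int.floor_natCast_add, Int.floor_sub_eq_of_abs_lt hfract he]

theorem beta_add_beta_fib_sub {k x : ℕ} (hx : 0 < x) (hxk : x < fib (k + 2)) :
    beta x + beta (fib (k + 3) - x) + 1 = fib (k + 4) := by
  have hfract := fract_goldenRatio_mul_mem_Icc (k + 1) hx hxk
  have hpos : 0 < Int.fract (φ * x) := (pow_pos (inv_pos.mpr goldenRatio_pos) _).trans_le hfract.1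
  have hfract' : Int.fract (-(φ * x)) ∈ Icc (φ⁻¹ ^ (k + 1)) (1 - φ⁻¹ ^ (k + 1)) := by
    rw [Int.fract_neg hpos.ne']
    constructor <;> linarith [hfract.1, hfract.2]
  have he : |ψ ^ (k + 3)| < φ⁻¹ ^ (k + 1) := by
    rw [abs_goldenConj_pow]; exact inv_goldenRatio_pow_lt (by omega)
  have hle : x ≤ fib (k + 3) := hxk.le.trans Nat.fib_le_fib_succ
  have hφ : φ * ((fib (k + 3) - x : ℕ) : ℝ) = fib (k + 4) + (-(φ * x) - ψ ^ (k + 3)) := by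
    rw [Nat.cast_sub hle, mul_sub, goldenRatio_mul_fib]; ring
  have hceil : ⌈φ * x⌉ = ⌊φ * x⌋ + 1 := Int.ceil_eq_floor_add_one_iff_notMem _ |>.mpr
    (Int.fract_ne_zero_iff.mp hpos.ne')
  zify [hle]
  rw [natCast_beta_eq_floor, natCast_beta_eq_floor, hφ, Int.floor_natCast_add, Int.floor_sub_eq_of_abs_lt hfract' he,
    Int.floor_neg, hceil]
  ring

theorem a_of_le_one {n : ℕ} (h : n ≤ 1) : a n = n := by
  rw [a, dif_pos h]

theorem a_fib_add {k m : ℕ} (hm : 0 < m) (hmk : m ≤ fib (k + 1)) :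
    a (fib (k + 2) + m) = fib (k + 3) - a m := by
  have h3 : fib (k + 3) = fib (k + 1) + fib (k + 2) := Nat.fib_add_two
  have hj : Nat.findGreatest (fun j => fib j < fib (k + 2) + m) (fib (k + 2) + m) = k + 2 := by
    rw [Nat.findGreatest_eq_iff]
    refine ⟨by have := Nat.le_fib_add_one (k + 2); omega, fun _ => by omega, fun j hj _ => ?_⟩
    have := Nat.fib_mono (show k + 3 ≤ j by omega)
    omega
  have h2 : 0 < fib (k + 2) := Nat.fib_pos.mpr (by omega)
  rw [a, dif_neg (by omega), hj, Nat.add_sub_cancel_left]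

theorem exists_eq_fib_add {n : ℕ} (hn : 2 ≤ n) :
    ∃ k m, n = fib (k + 2) + m ∧ 0 < m ∧ m ≤ fib (k + 1) := by
  have hex : ∃ j, n ≤ fib j := ⟨n + 1, by have := Nat.le_fib_add_one (n + 1); omega⟩
  have h3 : 3 ≤ Nat.find hex := by
    by_contra! h
    have := (Nat.find_spec hex).trans (Nat.fib_mono (show Nat.find hex ≤ 2 by omega))
    rw [Nat.fib_two] at this
    omega
  obtain ⟨k, hk⟩ : ∃ k, Nat.find hex = k + 3 := ⟨Nat.find hex - 3, by omega⟩
  have hle := Nat.find_spec hex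
  have hlt := Nat.find_min hex (show k + 2 < Nat.find hex by omega)
  have : fib (k + 3) = fib (k + 1) + fib (k + 2) := Nat.fib_add_two
  rw [hk] at hle
  exact ⟨k, n - fib (k + 2), by omega, by omega, by omega⟩

theorem a_le_fib {n j : ℕ} (h : n ≤ fib j) : a n ≤ fib j := by
  rcases Nat.lt_or_ge n 2 with hn | hn
  · rwa [a_of_le_one (by omega)]
  obtain ⟨k, m, rfl, hm, hmk⟩ := exists_eq_fib_add hn
  have hj : k + 2 < j := Nat.fib_mono.reflect_lt (by omega)
  rw [a_fib_add hm hmk]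
  exact (Nat.sub_le _ _).trans (Nat.fib_mono hj)

theorem a_pos {n : ℕ} (h : 0 < n) : 0 < a n := by
  rcases Nat.lt_or_ge n 2 with hn | hn
  · rw [a_of_le_one (by omega)]; exact h
  obtain ⟨k, m, rfl, hm, hmk⟩ := exists_eq_fib_add hn
  have hfib : fib (k + 3) = fib (k + 1) + fib (k + 2) := Nat.fib_add_two
  have hfib_pos : 0 < fib (k + 2) := Nat.fib_pos.mpr (by omega)
  have ham := a_le_fib hmk
  rw [a_fib_add hm hmk]
  omega

theorem a_le_beta (n : ℕ) : a n ≤ beta n := by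
  rcases Nat.lt_or_ge n 2 with hn | hn
  · rw [a_of_le_one (by omega)]; exact le_beta n
  obtain ⟨k, m, rfl, hm, hmk⟩ := exists_eq_fib_add hn
  rw [a_fib_add hm hmk]
  exact (Nat.sub_le _ _).trans (fib_succ_le_beta (k := k + 1) (Nat.lt_add_of_pos_right hm))

theorem a_beta_mem_Icc (n : ℕ) : a (beta n) ∈ Icc (beta (a n)) (beta (a n) + 1) := by
  induction n using Nat.strong_induction_on with
  | _ n ih =>
  rcases Nat.lt_or_ge n 3 with hn | hn
  · have hfib : fib 3 = 2 ∧ fib 4 = 3 := ⟨rfl, rfl⟩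
    have a2 : a 2 = 1 := by simpa [a_of_le_one, hfib] using a_fib_add (k := 0) one_pos le_rfl
    have a3 : a 3 = 2 := by simpa [a_of_le_one, hfib] using a_fib_add (k := 1) one_pos le_rfl
    have b0 : beta 0 = 0 := by simp [beta]
    interval_cases n <;> simp [a_of_le_one, b0, beta_one, beta_two, a2, a3]
  obtain ⟨k, m, rfl, hm, hmk⟩ := exists_eq_fib_add (by omega : 2 ≤ n)
  have hk : k ≠ 0 := by
    rintro rfl
    rw [zero_add, Nat.fib_one] at hmk
    rw [Nat.fib_two] at hn
    omega
  have hmk' : m < fib (k + 2) := hmk.trans_lt (Nat.fib_lt_fib_succ (by omega))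
  have hβm : beta m ≤ fib (k + 2) := (beta_mono hmk).trans (beta_fib_le _)
  have hx := a_le_fib hmk
  have hsub := beta_add_beta_fib_sub (a_pos hm) (hx.trans_lt (Nat.fib_lt_fib_succ (by omega)))
  obtain ⟨ih₁, ih₂⟩ := ih m (by omega)
  have hβn : a (fib (k + 3) + beta m) = fib (k + 4) - a (beta m) :=
    a_fib_add (k := k + 1) (hm.trans_le (le_beta m)) hβm
  -- both sides are `F_{k+4}` minus the corresponding sides for `m`, in swapped order
  rw [a_fib_add hm hmk, beta_fib_add hm hmk', hβn]
  exact ⟨by omega, by omega⟩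

/-- (a) `a (β n) ≥ β (a n)`; (b) `β (a (β n)) ≥ a (β (a n))`. -/
theorem a105774_composition_inequalities :
    (∀ n : ℕ, beta (a n) ≤ a (beta n)) ∧
    (∀ n : ℕ, a (beta (a n)) ≤ beta (a (beta n))) :=
  ⟨fun n => (a_beta_mem_Icc n).1,
    fun n => (a_le_beta _).trans (beta_mono (a_beta_mem_Icc n).1)⟩
end
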